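/- Let ψ ∈ L¹(ℝ²) and F ∈ 𝒮(𝕊). Then the shearlet synthesis integral 𝒮^t_ψ F(x) = ∫_{ℝ^×}∫_ℝ∫_{ℝ²} F(b,s,a) π_{b,s,a}ψ(x) db ds da/|a|³ converges absolutely for every x ∈ ℝ², and |𝒮^t_ψ F(x)| ≤ C ‖ψ‖_{L¹} (p^{0,0,0,0}_{0,0,2,9/4}(F) + p^{0,0,0,0}_{0,0,2,0}(F)) uniformly in x; in particular 𝒮^t : 𝒮(𝕊) × L¹(ℝ²) → L^∞(ℝ²) is continuous bilinear. -/

import Mathlib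

open MeasureTheory Complex SchwartzMap
open scoped FourierTransform RealInnerProductSpace

noncomputable section

abbrev E2 := EuclideanSpace ℝ (Fin 2)

/-- construct a point of ℝ² -/
def e2 (u v : ℝ) : E2 := (WithLp.equiv 2 (Fin 2 → ℝ)).symm ![u, v]

/-- Japanese bracket ⟨x⟩ = (1+‖x‖²)^{1/2}. -/
def jp {E : Type*} [NormedAddCommGroup E] (x : E) : ℝ := Real.sqrt (1 + ‖x‖^2)

/-- Schwartz seminorms ρ_ν. -/
def rho {E : Type*} [NormedAddCommGroup E] [NormedSpace ℝ E] (ν : ℕ) (f : E → ℂ) : ℝ :=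
  ⨆ p : E × Fin (ν + 1), jp p.1 ^ ν * ‖iteratedFDeriv ℝ p.2 f p.1‖

/-- Lizorkin membership on ℝ²: Schwartz with all vanishing moments. -/
def IsLizorkin2 (f : E2 → ℂ) : Prop :=
  (∃ g : SchwartzMap E2 ℂ, ⇑g = f) ∧
    ∀ m₁ m₂ : ℕ, ∫ x : E2, ((x 0) ^ m₁ * (x 1) ^ m₂ : ℝ) • f x = 0

/-- shearlet representation π_{b,s,a}ψ -/
def srep (ψ : E2 → ℂ) (b : E2) (s a : ℝ) (x : E2) : ℂ :=
  (|a| ^ (-(3:ℝ)/4) : ℝ) •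
    ψ (e2 ((x 0 - b 0 + s * (x 1 - b 1)) / a) (Real.sqrt |a| * (x 1 - b 1) / a))

/-- shearlet transform 𝒮_ψ f (b,s,a) = ⟨f, π_{b,s,a}ψ⟩ -/
def sTrans (ψ f : E2 → ℂ) (b : E2) (s a : ℝ) : ℂ :=
  ∫ x : E2, f x * (starRingEnd ℂ) (srep ψ b s a x)

/-- shearlet synthesis operator -/
def sSynth (ψ : E2 → ℂ) (Φ : ℝ → ℝ → ℝ → ℝ → ℂ) (x : E2) : ℂ :=
  ∫ p : ℝ × ℝ × ℝ × ℝ,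
    (|p.2.2.2| ^ (-(3:ℝ)) : ℝ) •
      (Φ p.1 p.2.1 p.2.2.1 p.2.2.2 * srep ψ (e2 p.1 p.2.1) p.2.2.1 p.2.2.2 x)

/-- mixed partial derivative ∂_a^γ ∂_s^β ∂_{b₂}^{α₂} ∂_{b₁}^{α₁} Φ -/
def mixedD (α₁ α₂ β γ : ℕ) (Φ : ℝ → ℝ → ℝ → ℝ → ℂ) (b₁ b₂ s a : ℝ) : ℂ :=
  iteratedDeriv γ (fun a' => iteratedDeriv β (fun s' =>
    iteratedDeriv α₂ (fun y => iteratedDeriv α₁ (fun x => Φ x y s' a') b₁) b₂) s) a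

/-- the weight in the norms of 𝒮(𝕊), with real exponent m -/
def wS (k₁ k₂ l : ℕ) (m : ℝ) (b₁ b₂ s a : ℝ) : ℝ :=
  jp b₁ ^ k₁ * jp b₂ ^ k₂ * jp s ^ l * (|a| ^ m + |a| ^ (-m))

/-- the norms p^{α₁,α₂,β,γ}_{k₁,k₂,l,m} on 𝒮(𝕊) -/
def pN (k₁ k₂ l : ℕ) (m : ℝ) (α₁ α₂ β γ : ℕ) (Φ : ℝ → ℝ → ℝ → ℝ → ℂ) : ℝ :=
  ⨆ q : ℝ × ℝ × ℝ × {a : ℝ // a ≠ 0},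
    wS k₁ k₂ l m q.1 q.2.1 q.2.2.1 q.2.2.2 *
      ‖mixedD α₁ α₂ β γ Φ q.1 q.2.1 q.2.2.1 q.2.2.2‖

/-- membership in the test function space 𝒮(𝕊) -/
def MemSS (Φ : ℝ → ℝ → ℝ → ℝ → ℂ) : Prop :=
  ContDiffOn ℝ (⊤ : ℕ∞) (fun p : ℝ × ℝ × ℝ × ℝ => Φ p.1 p.2.1 p.2.2.1 p.2.2.2)
      {p : ℝ × ℝ × ℝ × ℝ | p.2.2.2 ≠ 0} ∧
    ∀ k₁ k₂ l m α₁ α₂ β γ : ℕ, ∃ C : ℝ, ∀ b₁ b₂ s a : ℝ, a ≠ 0 →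
      wS k₁ k₂ l (m : ℝ) b₁ b₂ s a * ‖mixedD α₁ α₂ β γ Φ b₁ b₂ s a‖ ≤ C



-- ===================== auxiliary lemmas =====================

open scoped ENNReal


lemma lin1 (f : ℝ → ℝ≥0∞) (hf : Measurable f) (k c : ℝ) (hk : k ≠ 0) :
    ∫⁻ t : ℝ, f ((c - t) / k) = ENNReal.ofReal |k| * ∫⁻ w, f w := by
  have hm : (-k⁻¹) ≠ 0 := by simp [hk]
  have key : (fun t : ℝ => (c - t) / k) = (fun y : ℝ => y + c / k) ∘ (fun t => (-k⁻¹) * t) := by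
    funext t; simp only [Function.comp_apply]; ring
  have hmap : Measure.map (fun t : ℝ => (c - t) / k) volume
      = ENNReal.ofReal |k| • volume := by
    rw [key, ← Measure.map_map (by fun_prop) (by fun_prop)]
    rw [Real.map_volume_mul_left hm]
    rw [Measure.map_smul]
    rw [map_add_right_eq_self volume (c / k)]
    congr 1
    simp [abs_inv]
  calc ∫⁻ t : ℝ, f ((c - t) / k)
      = ∫⁻ y, f y ∂(Measure.map (fun t : ℝ => (c - t) / k) volume) := by
        rw [lintegral_map hf (by fun_prop)]
    _ = ENNReal.ofReal |k| * ∫⁻ w, f w := by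
        rw [hmap, lintegral_smul_measure, smul_eq_mul]

lemma lemM (Ψ : ℝ × ℝ → ℝ≥0∞) (hΨ : Measurable Ψ) (d : ℝ × ℝ → ℝ) (hd : Measurable d)
    (hd0 : ∀ s, d (s, 0) = 0) (c₁ c₂ : ℝ) :
    ∫⁻ p : ℝ × ℝ × ℝ × ℝ, ENNReal.ofReal (d p.2.2) *
        Ψ ((c₁ - p.1 + p.2.2.1 * (c₂ - p.2.1)) / p.2.2.2,
           Real.sqrt |p.2.2.2| * (c₂ - p.2.1) / p.2.2.2)
      = (∫⁻ q : ℝ × ℝ, ENNReal.ofReal (d q) *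
          ENNReal.ofReal (|q.2| * (|q.2| / Real.sqrt |q.2|))) * ∫⁻ q : ℝ × ℝ, Ψ q := by
  set G : ℝ × ℝ × ℝ × ℝ → ℝ≥0∞ := fun p => ENNReal.ofReal (d p.2.2) *
        Ψ ((c₁ - p.1 + p.2.2.1 * (c₂ - p.2.1)) / p.2.2.2,
           Real.sqrt |p.2.2.2| * (c₂ - p.2.1) / p.2.2.2) with hGdef
  have hG : Measurable G := by
    apply Measurable.mul
    · fun_prop
    · apply hΨ.comp
      fun_prop
  set H : ℝ → ℝ≥0∞ := fun v => ∫⁻ w, Ψ (w, v) with hHdef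
  have hH : Measurable H := by
    apply Measurable.lintegral_prod_left
    exact hΨ
  have hIΨ : ∫⁻ v, H v = ∫⁻ q : ℝ × ℝ, Ψ q := by
    rw [Measure.volume_eq_prod ℝ ℝ, lintegral_prod _ hΨ.aemeasurable]
    exact (lintegral_lintegral_swap (f := fun w v => Ψ (w, v)) (by exact hΨ.aemeasurable)).symm
  -- Step A: peel off b₁ and swap
  have stepA : ∫⁻ p : ℝ × ℝ × ℝ × ℝ, G p
      = ∫⁻ r : ℝ × ℝ × ℝ, ∫⁻ b₁ : ℝ, G (b₁, r) := by
    rw [Measure.volume_eq_prod ℝ (ℝ × ℝ × ℝ), lintegral_prod _ hG.aemeasurable]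
    exact lintegral_lintegral_swap (f := fun b₁ r => G (b₁, r)) (by exact hG.aemeasurable)
  -- Step C: evaluate inner integral over b₁
  have stepC : ∀ r : ℝ × ℝ × ℝ, ∫⁻ b₁ : ℝ, G (b₁, r)
      = ENNReal.ofReal (d r.2) * (ENNReal.ofReal |r.2.2| *
          H (Real.sqrt |r.2.2| * (c₂ - r.1) / r.2.2)) := by
    rintro ⟨b₂, s, a⟩
    rcases eq_or_ne a 0 with ha | ha
    · subst ha
      simp [hGdef, hd0 s]
    · simp only [hGdef]
      rw [lintegral_const_mul' _ _ ENNReal.ofReal_ne_top]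
      congr 1
      have harg : ∀ b₁ : ℝ, (c₁ - b₁ + s * (c₂ - b₂)) / a
          = ((c₁ + s * (c₂ - b₂)) - b₁) / a := by intro b₁; ring_nf
      calc ∫⁻ b₁ : ℝ, Ψ ((c₁ - b₁ + s * (c₂ - b₂)) / a, Real.sqrt |a| * (c₂ - b₂) / a)
          = ∫⁻ b₁ : ℝ, (fun w => Ψ (w, Real.sqrt |a| * (c₂ - b₂) / a))
              (((c₁ + s * (c₂ - b₂)) - b₁) / a) := by
            apply lintegral_congr; intro b₁; rw [harg b₁]
        _ = ENNReal.ofReal |a| * H (Real.sqrt |a| * (c₂ - b₂) / a) :=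
            lin1 (fun w => Ψ (w, Real.sqrt |a| * (c₂ - b₂) / a)) (by fun_prop) a
              (c₁ + s * (c₂ - b₂)) ha
  -- Step D: peel off b₂ and swap
  set g₂ : ℝ × ℝ × ℝ → ℝ≥0∞ := fun r => ENNReal.ofReal (d r.2) * (ENNReal.ofReal |r.2.2| *
          H (Real.sqrt |r.2.2| * (c₂ - r.1) / r.2.2)) with hg₂def
  have hg₂ : Measurable g₂ := by
    apply Measurable.mul
    · fun_prop
    · apply Measurable.mul
      · fun_prop
      · apply hH.comp; fun_prop
  have stepD : ∫⁻ r : ℝ × ℝ × ℝ, g₂ r = ∫⁻ q : ℝ × ℝ, ∫⁻ b₂ : ℝ, g₂ (b₂, q) := by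
    rw [Measure.volume_eq_prod ℝ (ℝ × ℝ), lintegral_prod _ hg₂.aemeasurable]
    exact lintegral_lintegral_swap (f := fun b₂ q => g₂ (b₂, q)) (by exact hg₂.aemeasurable)
  -- Step E: evaluate inner integral over b₂
  have stepE : ∀ q : ℝ × ℝ, ∫⁻ b₂ : ℝ, g₂ (b₂, q)
      = (ENNReal.ofReal (d q) * ENNReal.ofReal (|q.2| * (|q.2| / Real.sqrt |q.2|)))
          * ∫⁻ q' : ℝ × ℝ, Ψ q' := by
    rintro ⟨s, a⟩
    rcases eq_or_ne a 0 with ha | ha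
    · subst ha
      simp [hg₂def, hd0 s]
    · have hsq : Real.sqrt |a| ≠ 0 := by positivity
      have hk : a / Real.sqrt |a| ≠ 0 := div_ne_zero ha hsq
      simp only [hg₂def]
      rw [lintegral_const_mul' _ _ ENNReal.ofReal_ne_top,
          lintegral_const_mul' _ _ ENNReal.ofReal_ne_top]
      have harg : ∀ b₂ : ℝ, Real.sqrt |a| * (c₂ - b₂) / a = (c₂ - b₂) / (a / Real.sqrt |a|) := by
        intro b₂; field_simp
      have : ∫⁻ b₂ : ℝ, H (Real.sqrt |a| * (c₂ - b₂) / a)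
          = ENNReal.ofReal (|a| / Real.sqrt |a|) * ∫⁻ v, H v := by
        calc ∫⁻ b₂ : ℝ, H (Real.sqrt |a| * (c₂ - b₂) / a)
            = ∫⁻ b₂ : ℝ, H ((c₂ - b₂) / (a / Real.sqrt |a|)) := by
              apply lintegral_congr; intro b₂; rw [harg b₂]
          _ = ENNReal.ofReal (_root_.abs (a / Real.sqrt (_root_.abs a))) * ∫⁻ v, H v := lin1 H hH _ c₂ hk
          _ = ENNReal.ofReal (|a| / Real.sqrt |a|) * ∫⁻ v, H v := by
              rw [abs_div, _root_.abs_of_nonneg (Real.sqrt_nonneg _)]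
      rw [this, hIΨ]
      rw [ENNReal.ofReal_mul (abs_nonneg a)]
      ring
  calc ∫⁻ p : ℝ × ℝ × ℝ × ℝ, G p
      = ∫⁻ r : ℝ × ℝ × ℝ, g₂ r := by rw [stepA]; exact lintegral_congr stepC
    _ = ∫⁻ q : ℝ × ℝ, ∫⁻ b₂ : ℝ, g₂ (b₂, q) := stepD
    _ = ∫⁻ q : ℝ × ℝ, (ENNReal.ofReal (d q) * ENNReal.ofReal (|q.2| * (|q.2| / Real.sqrt |q.2|)))
          * ∫⁻ q' : ℝ × ℝ, Ψ q' := lintegral_congr stepE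
    _ = (∫⁻ q : ℝ × ℝ, ENNReal.ofReal (d q) *
          ENNReal.ofReal (|q.2| * (|q.2| / Real.sqrt |q.2|))) * ∫⁻ q : ℝ × ℝ, Ψ q := by
        exact lintegral_mul_const _ (by fun_prop)


def meq : (ℝ × ℝ) ≃ᵐ E2 :=
  (MeasurableEquiv.finTwoArrow (α := ℝ)).symm.trans
    (MeasurableEquiv.toLp 2 (Fin 2 → ℝ))

lemma meq_apply (u v : ℝ) : meq (u, v) = e2 u v := by
  ext i
  fin_cases i <;> rfl

lemma meq_mp : MeasurePreserving (⇑meq) (volume : Measure (ℝ × ℝ)) (volume : Measure E2) :=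
  ((EuclideanSpace.volume_preserving_symm_measurableEquiv_toLp (Fin 2)).symm _).comp
    ((volume_preserving_finTwoArrow ℝ).symm _)

lemma null_a0 : (volume : Measure (ℝ × ℝ × ℝ × ℝ)) {p : ℝ × ℝ × ℝ × ℝ | p.2.2.2 = 0} = 0 := by
  have hset : {p : ℝ × ℝ × ℝ × ℝ | p.2.2.2 = 0}
      = Set.univ ×ˢ (Set.univ ×ˢ (Set.univ ×ˢ ({0} : Set ℝ))) := by
    ext p
    simp only [Set.mem_setOf_eq, Set.mem_prod, Set.mem_univ, true_and, Set.mem_singleton_iff]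
  rw [hset, Measure.volume_eq_prod ℝ (ℝ × ℝ × ℝ), Measure.prod_prod,
    Measure.volume_eq_prod ℝ (ℝ × ℝ), Measure.prod_prod,
    Measure.volume_eq_prod ℝ ℝ, Measure.prod_prod]
  simp

lemma wS_nonneg (k₁ k₂ l : ℕ) (m : ℝ) (b₁ b₂ s a : ℝ) : 0 ≤ wS k₁ k₂ l m b₁ b₂ s a := by
  unfold wS jp
  positivity

lemma mixedD0000 (Φ : ℝ → ℝ → ℝ → ℝ → ℂ) (b₁ b₂ s a : ℝ) :
    mixedD 0 0 0 0 Φ b₁ b₂ s a = Φ b₁ b₂ s a := by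
  simp [mixedD]

lemma weight_cmp {a : ℝ} (ha : a ≠ 0) :
    |a| ^ ((9:ℝ)/4) + |a| ^ (-((9:ℝ)/4)) ≤ 2 * (|a| ^ ((3:ℕ):ℝ) + |a| ^ (-((3:ℕ):ℝ))) := by
  have hx : (0:ℝ) < |a| := abs_pos.mpr ha
  have h3 : ((3:ℕ):ℝ) = (3:ℝ) := by norm_num
  rw [h3]
  have hr3 : (0:ℝ) ≤ |a| ^ (3:ℝ) := Real.rpow_nonneg (abs_nonneg a) _
  have hr3' : (0:ℝ) ≤ |a| ^ (-(3:ℝ)) := Real.rpow_nonneg (abs_nonneg a) _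
  rcases le_total 1 |a| with h1 | h1
  · have e1 : |a| ^ ((9:ℝ)/4) ≤ |a| ^ (3:ℝ) :=
      Real.rpow_le_rpow_of_exponent_le h1 (by norm_num)
    have e2 : |a| ^ (-((9:ℝ)/4)) ≤ |a| ^ (3:ℝ) := by
      calc |a| ^ (-((9:ℝ)/4)) ≤ |a| ^ (0:ℝ) :=
            Real.rpow_le_rpow_of_exponent_le h1 (by norm_num)
        _ ≤ |a| ^ (3:ℝ) := Real.rpow_le_rpow_of_exponent_le h1 (by norm_num)
    linarith
  · have e1 : |a| ^ ((9:ℝ)/4) ≤ |a| ^ (-(3:ℝ)) := by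
      calc |a| ^ ((9:ℝ)/4) ≤ |a| ^ (0:ℝ) :=
            Real.rpow_le_rpow_of_exponent_ge hx h1 (by norm_num)
        _ ≤ |a| ^ (-(3:ℝ)) := Real.rpow_le_rpow_of_exponent_ge hx h1 (by norm_num)
    have e2 : |a| ^ (-((9:ℝ)/4)) ≤ |a| ^ (-(3:ℝ)) :=
      Real.rpow_le_rpow_of_exponent_ge hx h1 (by norm_num)
    linarith

lemma phi_bound (Φ : ℝ → ℝ → ℝ → ℝ → ℂ) (hΦ : MemSS Φ) (b₁ b₂ s a : ℝ) (ha : a ≠ 0) :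
    ‖Φ b₁ b₂ s a‖ ≤ pN 0 0 2 ((9:ℝ)/4) 0 0 0 0 Φ *
      ((1 + s^2) * (|a| ^ ((9:ℝ)/4) + |a| ^ (-((9:ℝ)/4))))⁻¹ := by
  obtain ⟨C₃, hC₃⟩ := hΦ.2 0 0 2 3 0 0 0 0
  have hjp2 : ∀ u : ℝ, jp u ^ 2 = 1 + u ^ 2 := by
    intro u
    rw [jp, Real.sq_sqrt (by positivity), Real.norm_eq_abs, _root_.sq_abs]
  have hbdd : BddAbove (Set.range fun q : ℝ × ℝ × ℝ × {a : ℝ // a ≠ 0} =>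
      wS 0 0 2 ((9:ℝ)/4) q.1 q.2.1 q.2.2.1 q.2.2.2 *
        ‖mixedD 0 0 0 0 Φ q.1 q.2.1 q.2.2.1 q.2.2.2‖) := by
    refine ⟨max (2 * C₃) 0, ?_⟩
    rintro y ⟨⟨u₁, u₂, u₃, u₄, hu⟩, rfl⟩
    have hw : wS 0 0 2 ((9:ℝ)/4) u₁ u₂ u₃ u₄ ≤ 2 * wS 0 0 2 ((3:ℕ):ℝ) u₁ u₂ u₃ u₄ := by
      simp only [wS, pow_zero, one_mul]
      have hc := weight_cmp hu
      have hjs : (0:ℝ) ≤ jp u₃ ^ 2 := by positivity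
      nlinarith [hc, hjs]
    have hb : wS 0 0 2 ((3:ℕ):ℝ) u₁ u₂ u₃ u₄ * ‖mixedD 0 0 0 0 Φ u₁ u₂ u₃ u₄‖ ≤ C₃ :=
      hC₃ u₁ u₂ u₃ u₄ hu
    have hn : (0:ℝ) ≤ ‖mixedD 0 0 0 0 Φ u₁ u₂ u₃ u₄‖ := norm_nonneg _
    refine le_max_of_le_left ?_
    calc wS 0 0 2 ((9:ℝ)/4) u₁ u₂ u₃ u₄ * ‖mixedD 0 0 0 0 Φ u₁ u₂ u₃ u₄‖
        ≤ (2 * wS 0 0 2 ((3:ℕ):ℝ) u₁ u₂ u₃ u₄) * ‖mixedD 0 0 0 0 Φ u₁ u₂ u₃ u₄‖ :=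
          mul_le_mul_of_nonneg_right hw hn
      _ = 2 * (wS 0 0 2 ((3:ℕ):ℝ) u₁ u₂ u₃ u₄ * ‖mixedD 0 0 0 0 Φ u₁ u₂ u₃ u₄‖) := by ring
      _ ≤ 2 * C₃ := by linarith
  have hle : wS 0 0 2 ((9:ℝ)/4) b₁ b₂ s a * ‖mixedD 0 0 0 0 Φ b₁ b₂ s a‖
      ≤ pN 0 0 2 ((9:ℝ)/4) 0 0 0 0 Φ := by
    unfold pN
    exact le_ciSup hbdd (⟨b₁, b₂, s, ⟨a, ha⟩⟩ : ℝ × ℝ × ℝ × {a : ℝ // a ≠ 0})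
  rw [mixedD0000] at hle
  have hwval : wS 0 0 2 ((9:ℝ)/4) b₁ b₂ s a
      = (1 + s^2) * (|a| ^ ((9:ℝ)/4) + |a| ^ (-((9:ℝ)/4))) := by
    simp only [wS, pow_zero, one_mul]
    rw [hjp2]
  have hwpos : (0:ℝ) < (1 + s^2) * (|a| ^ ((9:ℝ)/4) + |a| ^ (-((9:ℝ)/4))) := by
    have hx : (0:ℝ) < |a| := abs_pos.mpr ha
    have := Real.rpow_pos_of_pos hx ((9:ℝ)/4)
    have := Real.rpow_pos_of_pos hx (-((9:ℝ)/4))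
    positivity
  rw [hwval] at hle
  rw [mul_comm] at hle
  rw [← le_div_iff₀ hwpos] at hle
  rwa [div_eq_mul_inv] at hle

lemma key_ineq (s a : ℝ) :
    |a| ^ (-(3:ℝ)) * |a| ^ (-(3:ℝ)/4) *
        ((1 + s^2) * (|a| ^ ((9:ℝ)/4) + |a| ^ (-((9:ℝ)/4))))⁻¹ *
        (|a| * (|a| / Real.sqrt |a|))
      ≤ 2 * ((1 + s^2) * (1 + a^2))⁻¹ := by
  rcases eq_or_ne a 0 with rfl | ha
  · rw [abs_zero, Real.zero_rpow (by norm_num : (-(3:ℝ)) ≠ 0)]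
    simp only [zero_mul, mul_zero]
    positivity
  · have hx : (0:ℝ) < |a| := abs_pos.mpr ha
    set t : ℝ := |a| ^ ((1:ℝ)/4) with ht
    have ht0 : 0 < t := Real.rpow_pos_of_pos hx _
    have ex4 : t ^ (4:ℕ) = |a| := by
      rw [ht, ← Real.rpow_natCast (|a| ^ ((1:ℝ)/4)) 4, ← Real.rpow_mul (abs_nonneg a)]
      norm_num
    have e12 : |a| ^ (-(3:ℝ)) = (t ^ (12:ℕ))⁻¹ := by
      rw [ht, ← Real.rpow_natCast (|a| ^ ((1:ℝ)/4)) 12, ← Real.rpow_mul (abs_nonneg a),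
        ← Real.rpow_neg (abs_nonneg a)]
      norm_num
    have e3 : |a| ^ (-(3:ℝ)/4) = (t ^ (3:ℕ))⁻¹ := by
      rw [ht, ← Real.rpow_natCast (|a| ^ ((1:ℝ)/4)) 3, ← Real.rpow_mul (abs_nonneg a),
        ← Real.rpow_neg (abs_nonneg a)]
      norm_num
    have e9 : |a| ^ ((9:ℝ)/4) = t ^ (9:ℕ) := by
      rw [ht, ← Real.rpow_natCast (|a| ^ ((1:ℝ)/4)) 9, ← Real.rpow_mul (abs_nonneg a)]
      norm_num
    have e9' : |a| ^ (-((9:ℝ)/4)) = (t ^ (9:ℕ))⁻¹ := by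
      rw [ht, ← Real.rpow_natCast (|a| ^ ((1:ℝ)/4)) 9, ← Real.rpow_mul (abs_nonneg a),
        ← Real.rpow_neg (abs_nonneg a)]
      norm_num
    have esq : Real.sqrt |a| = t ^ (2:ℕ) := by
      rw [Real.sqrt_eq_rpow, ht, ← Real.rpow_natCast (|a| ^ ((1:ℝ)/4)) 2,
        ← Real.rpow_mul (abs_nonneg a)]
      norm_num
    have ea : a ^ 2 = t ^ (8:ℕ) := by
      rw [← _root_.sq_abs a, ← ex4]; ring
    rw [e12, e3, e9, e9', esq, ← ex4, ea]
    have h8 : t ^ (8:ℕ) ≤ 1 + t ^ (18:ℕ) := by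
      rcases le_total t 1 with h | h
      · have h1 : t ^ (8:ℕ) ≤ 1 := pow_le_one₀ ht0.le h
        have h2 : (0:ℝ) ≤ t ^ (18:ℕ) := by positivity
        linarith
      · have h1 : t ^ (8:ℕ) ≤ t ^ (18:ℕ) := pow_le_pow_right₀ h (by norm_num)
        have h2 : (0:ℝ) ≤ t ^ (18:ℕ) := by positivity
        linarith
    have hs2 : (0:ℝ) < 1 + s^2 := by positivity
    have hL : (t ^ (12:ℕ))⁻¹ * (t ^ (3:ℕ))⁻¹ *
        ((1 + s^2) * (t ^ (9:ℕ) + (t ^ (9:ℕ))⁻¹))⁻¹ *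
        (t ^ (4:ℕ) * (t ^ (4:ℕ) / t ^ (2:ℕ)))
        = ((1 + s^2) * (1 + t ^ (18:ℕ)))⁻¹ := by
      field_simp
      ring
    rw [hL]
    have hY : (0:ℝ) < (1 + s^2) * (1 + t ^ (8:ℕ)) := by positivity
    have hYX : (1 + s^2) * (1 + t ^ (8:ℕ)) / 2 ≤ (1 + s^2) * (1 + t ^ (18:ℕ)) := by
      have h18 : (0:ℝ) ≤ t ^ (18:ℕ) := by positivity
      have h9 : (1 + t ^ (8:ℕ)) / 2 ≤ 1 + t ^ (18:ℕ) := by linarith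
      calc (1 + s^2) * (1 + t ^ (8:ℕ)) / 2 = (1 + s^2) * ((1 + t ^ (8:ℕ)) / 2) := by ring
        _ ≤ (1 + s^2) * (1 + t ^ (18:ℕ)) := mul_le_mul_of_nonneg_left h9 hs2.le
    calc ((1 + s^2) * (1 + t ^ (18:ℕ)))⁻¹
        ≤ ((1 + s^2) * (1 + t ^ (8:ℕ)) / 2)⁻¹ := by
          apply inv_anti₀ (by positivity) hYX
      _ = 2 * ((1 + s^2) * (1 + t ^ (8:ℕ)))⁻¹ := by
          rw [inv_div, div_eq_mul_inv]
  

set_option maxHeartbeats 2000000 in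
/-- absolute convergence and L^∞ bound for the shearlet synthesis operator. -/
theorem synthesis_absolutely_convergent
    (ψ : E2 → ℂ) (hψ : Integrable ψ) (Φ : ℝ → ℝ → ℝ → ℝ → ℂ) (hΦ : MemSS Φ) :
    (∀ x : E2, Integrable (fun p : ℝ × ℝ × ℝ × ℝ =>
        (|p.2.2.2| ^ (-(3:ℝ)) : ℝ) •
          (Φ p.1 p.2.1 p.2.2.1 p.2.2.2 * srep ψ (e2 p.1 p.2.1) p.2.2.1 p.2.2.2 x))) ∧
    ∃ C : ℝ, 0 < C ∧ ∀ x : E2,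
      ‖sSynth ψ Φ x‖ ≤ C * (∫ y : E2, ‖ψ y‖) *
        (pN 0 0 2 ((9:ℝ)/4) 0 0 0 0 Φ + pN 0 0 2 0 0 0 0 0 Φ) := by
  obtain ⟨g₀, hg₀sm, hg₀ae⟩ := hψ.aestronglyMeasurable
  have hg₀meas : Measurable g₀ := hg₀sm.measurable
  set P₁ := pN 0 0 2 ((9:ℝ)/4) 0 0 0 0 Φ with hP₁def
  set P₂ := pN 0 0 2 0 0 0 0 0 Φ with hP₂def
  have hP₁0 : 0 ≤ P₁ :=
    Real.iSup_nonneg fun q => mul_nonneg (wS_nonneg _ _ _ _ _ _ _ _) (norm_nonneg _)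
  have hP₂0 : 0 ≤ P₂ :=
    Real.iSup_nonneg fun q => mul_nonneg (wS_nonneg _ _ _ _ _ _ _ _) (norm_nonneg _)
  have hIψ0 : 0 ≤ ∫ y : E2, ‖ψ y‖ := integral_nonneg fun _ => norm_nonneg _
  have hB : volume {y : E2 | ¬ ψ y = g₀ y} = 0 := by
    have h := hg₀ae
    rw [Filter.EventuallyEq, ae_iff] at h
    exact h
  obtain ⟨B', hBB', hB'meas, hB'0⟩ := exists_measurable_superset_of_null hB
  set N : Set (ℝ × ℝ) := (⇑meq) ⁻¹' B' with hN
  have hNmeas : MeasurableSet N := meq.measurable hB'meas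
  have hN0 : volume N = 0 := by
    rw [hN, meq_mp.measure_preimage hB'meas.nullMeasurableSet, hB'0]
  have haM : Measurable fun p : ℝ × ℝ × ℝ × ℝ => p.2.2.2 := by fun_prop
  have haenz : ∀ᵐ p : ℝ × ℝ × ℝ × ℝ, p.2.2.2 ≠ 0 := by
    rw [ae_iff]
    have hset : {p : ℝ × ℝ × ℝ × ℝ | ¬ p.2.2.2 ≠ 0} = {p : ℝ × ℝ × ℝ × ℝ | p.2.2.2 = 0} := by
      ext p; simp
    rw [hset]; exact null_a0
  set dd : ℝ × ℝ → ℝ := fun q => |q.2| ^ (-(3:ℝ)) * |q.2| ^ (-(3:ℝ)/4) *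
      ((1 + q.1^2) * (|q.2| ^ ((9:ℝ)/4) + |q.2| ^ (-((9:ℝ)/4))))⁻¹ with hdd
  have hddm : Measurable dd := by fun_prop
  have hdd0 : ∀ s : ℝ, dd (s, 0) = 0 := by
    intro s
    simp only [hdd, abs_zero]
    rw [Real.zero_rpow (by norm_num : (-(3:ℝ)) ≠ 0)]
    ring
  have hddnn : ∀ q : ℝ × ℝ, 0 ≤ dd q := by
    intro q
    simp only [hdd]
    positivity
  set Ψg : ℝ × ℝ → ℝ≥0∞ := fun q => ENNReal.ofReal ‖g₀ (meq q)‖ with hΨg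
  have hΨgm : Measurable Ψg :=
    ENNReal.measurable_ofReal.comp ((hg₀meas.comp meq.measurable).norm)
  have hIg : ∫⁻ q : ℝ × ℝ, Ψg q = ENNReal.ofReal (∫ y : E2, ‖ψ y‖) := by
    have h1 : ∫⁻ q : ℝ × ℝ, Ψg q = ∫⁻ y : E2, ENNReal.ofReal ‖g₀ y‖ := by
      simp only [hΨg]
      exact meq_mp.lintegral_comp_emb meq.measurableEmbedding
        (fun y : E2 => ENNReal.ofReal ‖g₀ y‖)
    rw [h1]
    have h2 : ∫⁻ y : E2, ENNReal.ofReal ‖g₀ y‖ = ∫⁻ y : E2, ENNReal.ofReal ‖ψ y‖ := by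
      apply lintegral_congr_ae
      filter_upwards [hg₀ae] with y hy
      rw [hy]
    rw [h2]
    exact (ofReal_integral_eq_lintegral_ofReal hψ.norm
      (Filter.Eventually.of_forall fun y => norm_nonneg _)).symm
  have hK : ∫⁻ q : ℝ × ℝ, ENNReal.ofReal (dd q) *
        ENNReal.ofReal (|q.2| * (|q.2| / Real.sqrt |q.2|))
      ≤ ENNReal.ofReal (2 * Real.pi) * ENNReal.ofReal Real.pi := by
    have step1 : ∫⁻ q : ℝ × ℝ, ENNReal.ofReal (dd q) *
          ENNReal.ofReal (|q.2| * (|q.2| / Real.sqrt |q.2|))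
        ≤ ∫⁻ q : ℝ × ℝ, ENNReal.ofReal (2 * (1 + q.1^2)⁻¹) *
            ENNReal.ofReal ((1 + q.2^2)⁻¹) := by
      apply lintegral_mono
      intro q
      show ENNReal.ofReal (dd q) * ENNReal.ofReal (|q.2| * (|q.2| / Real.sqrt |q.2|))
          ≤ ENNReal.ofReal (2 * (1 + q.1^2)⁻¹) * ENNReal.ofReal ((1 + q.2^2)⁻¹)
      rw [← ENNReal.ofReal_mul (hddnn q), ← ENNReal.ofReal_mul (by positivity)]
      apply ENNReal.ofReal_le_ofReal
      refine le_trans (le_of_eq ?_) ((key_ineq q.1 q.2).trans (le_of_eq ?_))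
      · simp only [hdd]
      · rw [mul_inv]; ring
    refine step1.trans (le_of_eq ?_)
    have hsplit : ∫⁻ q : ℝ × ℝ, ENNReal.ofReal (2 * (1 + q.1^2)⁻¹) *
          ENNReal.ofReal ((1 + q.2^2)⁻¹)
        = (∫⁻ u : ℝ, ENNReal.ofReal (2 * (1 + u^2)⁻¹)) *
          (∫⁻ v : ℝ, ENNReal.ofReal ((1 + v^2)⁻¹)) := by
      rw [Measure.volume_eq_prod ℝ ℝ]
      exact lintegral_prod_mul (f := fun u : ℝ => ENNReal.ofReal (2 * (1 + u^2)⁻¹))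
        (g := fun v : ℝ => ENNReal.ofReal ((1 + v^2)⁻¹)) (by fun_prop) (by fun_prop)
    rw [hsplit]
    congr 1
    · rw [← ofReal_integral_eq_lintegral_ofReal (integrable_inv_one_add_sq.const_mul 2)
        (Filter.Eventually.of_forall fun y => by positivity)]
      congr 1
      rw [integral_const_mul, integral_univ_inv_one_add_sq]
    · rw [← ofReal_integral_eq_lintegral_ofReal integrable_inv_one_add_sq
        (Filter.Eventually.of_forall fun y => by positivity), integral_univ_inv_one_add_sq]
  have main : ∀ x : E2,
      Integrable (fun p : ℝ × ℝ × ℝ × ℝ =>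
        (|p.2.2.2| ^ (-(3:ℝ)) : ℝ) •
          (Φ p.1 p.2.1 p.2.2.1 p.2.2.2 * srep ψ (e2 p.1 p.2.1) p.2.2.1 p.2.2.2 x)) ∧
      ‖sSynth ψ Φ x‖ ≤ 20 * (∫ y : E2, ‖ψ y‖) * (P₁ + P₂) := by
    intro x
    set F : ℝ × ℝ × ℝ × ℝ → ℂ := fun p =>
      (|p.2.2.2| ^ (-(3:ℝ)) : ℝ) •
        (Φ p.1 p.2.1 p.2.2.1 p.2.2.2 * srep ψ (e2 p.1 p.2.1) p.2.2.1 p.2.2.2 x) with hF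
    have hFeq : ∀ p : ℝ × ℝ × ℝ × ℝ, F p =
        (|p.2.2.2| ^ (-(3:ℝ)) : ℝ) •
          (Φ p.1 p.2.1 p.2.2.1 p.2.2.2 *
            ((|p.2.2.2| ^ (-(3:ℝ)/4) : ℝ) •
              ψ (e2 ((x 0 - p.1 + p.2.2.1 * (x 1 - p.2.1)) / p.2.2.2) (Real.sqrt |p.2.2.2| * (x 1 - p.2.1) / p.2.2.2)))) := fun p => rfl
    have hUm : Measurable (fun p : ℝ × ℝ × ℝ × ℝ => ((x 0 - p.1 + p.2.2.1 * (x 1 - p.2.1)) / p.2.2.2, Real.sqrt |p.2.2.2| * (x 1 - p.2.1) / p.2.2.2)) := by fun_prop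
    have hS0 : volume {p : ℝ × ℝ × ℝ × ℝ | p.2.2.2 ≠ 0 ∧ ((x 0 - p.1 + p.2.2.1 * (x 1 - p.2.1)) / p.2.2.2, Real.sqrt |p.2.2.2| * (x 1 - p.2.1) / p.2.2.2) ∈ N} = 0 := by
      set dI : ℝ × ℝ → ℝ := fun q => if q.2 = 0 then 0 else 1 with hdI
      have hdIm : Measurable dI := by
        apply Measurable.ite (measurable_snd (measurableSet_singleton (0:ℝ))) <;> fun_prop
      have hM := lemM (N.indicator 1) (measurable_one.indicator hNmeas) dI hdIm
        (fun s => by simp [hdI]) (x 0) (x 1)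
      have hSmeas : MeasurableSet {p : ℝ × ℝ × ℝ × ℝ | p.2.2.2 ≠ 0 ∧ ((x 0 - p.1 + p.2.2.1 * (x 1 - p.2.1)) / p.2.2.2, Real.sqrt |p.2.2.2| * (x 1 - p.2.1) / p.2.2.2) ∈ N} :=
        ((haM (measurableSet_singleton 0)).compl).inter (hUm hNmeas)
      have hLHS : ∫⁻ p : ℝ × ℝ × ℝ × ℝ, ENNReal.ofReal (dI p.2.2) * (N.indicator 1) ((x 0 - p.1 + p.2.2.1 * (x 1 - p.2.1)) / p.2.2.2, Real.sqrt |p.2.2.2| * (x 1 - p.2.1) / p.2.2.2)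
          = volume {p : ℝ × ℝ × ℝ × ℝ | p.2.2.2 ≠ 0 ∧ ((x 0 - p.1 + p.2.2.1 * (x 1 - p.2.1)) / p.2.2.2, Real.sqrt |p.2.2.2| * (x 1 - p.2.1) / p.2.2.2) ∈ N} := by
        rw [← lintegral_indicator_one hSmeas]
        apply lintegral_congr
        intro p
        by_cases h1 : p.2.2.2 = 0
        · simp [hdI, h1, Set.indicator_apply]
        · by_cases h2 : ((x 0 - p.1 + p.2.2.1 * (x 1 - p.2.1)) / p.2.2.2, Real.sqrt |p.2.2.2| * (x 1 - p.2.1) / p.2.2.2) ∈ N <;>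
            simp [hdI, h1, h2, Set.indicator_apply]
      rw [hLHS] at hM
      rw [hM, lintegral_indicator_one hNmeas, hN0, mul_zero]
    have haeS : ∀ᵐ p : ℝ × ℝ × ℝ × ℝ, ¬(p.2.2.2 ≠ 0 ∧ ((x 0 - p.1 + p.2.2.1 * (x 1 - p.2.1)) / p.2.2.2, Real.sqrt |p.2.2.2| * (x 1 - p.2.1) / p.2.2.2) ∈ N) := by
      rw [ae_iff]
      simpa only [not_not] using hS0
    have haeψ : ∀ᵐ p : ℝ × ℝ × ℝ × ℝ,
        ψ (e2 ((x 0 - p.1 + p.2.2.1 * (x 1 - p.2.1)) / p.2.2.2) (Real.sqrt |p.2.2.2| * (x 1 - p.2.1) / p.2.2.2)) = g₀ (e2 ((x 0 - p.1 + p.2.2.1 * (x 1 - p.2.1)) / p.2.2.2) (Real.sqrt |p.2.2.2| * (x 1 - p.2.1) / p.2.2.2)) := by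
      filter_upwards [haeS, haenz] with p h1 h2
      have h3 : ((x 0 - p.1 + p.2.2.1 * (x 1 - p.2.1)) / p.2.2.2, Real.sqrt |p.2.2.2| * (x 1 - p.2.1) / p.2.2.2) ∉ N := fun hmem => h1 ⟨h2, hmem⟩
      have h4 : e2 ((x 0 - p.1 + p.2.2.1 * (x 1 - p.2.1)) / p.2.2.2) (Real.sqrt |p.2.2.2| * (x 1 - p.2.1) / p.2.2.2) ∉ B' := by
        rw [hN] at h3
        simp only [Set.mem_preimage] at h3
        rwa [meq_apply] at h3
      by_contra h5
      exact h4 (hBB' h5)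
    have hψT : AEStronglyMeasurable
        (fun p : ℝ × ℝ × ℝ × ℝ => ψ (e2 ((x 0 - p.1 + p.2.2.1 * (x 1 - p.2.1)) / p.2.2.2) (Real.sqrt |p.2.2.2| * (x 1 - p.2.1) / p.2.2.2))) volume := by
      have hg : Measurable (fun p : ℝ × ℝ × ℝ × ℝ => g₀ (e2 ((x 0 - p.1 + p.2.2.1 * (x 1 - p.2.1)) / p.2.2.2) (Real.sqrt |p.2.2.2| * (x 1 - p.2.1) / p.2.2.2))) := by
        have heq : (fun p : ℝ × ℝ × ℝ × ℝ => g₀ (e2 ((x 0 - p.1 + p.2.2.1 * (x 1 - p.2.1)) / p.2.2.2) (Real.sqrt |p.2.2.2| * (x 1 - p.2.1) / p.2.2.2)))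
            = fun p : ℝ × ℝ × ℝ × ℝ => g₀ (meq ((x 0 - p.1 + p.2.2.1 * (x 1 - p.2.1)) / p.2.2.2, Real.sqrt |p.2.2.2| * (x 1 - p.2.1) / p.2.2.2)) := by
          funext p; rw [meq_apply]
        rw [heq]
        exact hg₀meas.comp (meq.measurable.comp hUm)
      exact hg.aestronglyMeasurable.congr (Filter.EventuallyEq.symm haeψ)
    have hsopen : MeasurableSet {p : ℝ × ℝ × ℝ × ℝ | p.2.2.2 ≠ 0} :=
      (haM (measurableSet_singleton 0)).compl
    have hrestr : volume.restrict {p : ℝ × ℝ × ℝ × ℝ | p.2.2.2 ≠ 0} = volume :=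
      Measure.restrict_eq_self_of_ae_mem haenz
    have hΦasm : AEStronglyMeasurable
        (fun p : ℝ × ℝ × ℝ × ℝ => Φ p.1 p.2.1 p.2.2.1 p.2.2.2) volume := by
      rw [← hrestr]
      exact (hΦ.1.continuousOn).aestronglyMeasurable hsopen
    have hASM : AEStronglyMeasurable F volume := by
      rw [show F = _ from funext hFeq]
      exact ((by fun_prop : Measurable fun p : ℝ × ℝ × ℝ × ℝ =>
          (|p.2.2.2| ^ (-(3:ℝ)) : ℝ)).aestronglyMeasurable).smul
        (hΦasm.mul (((by fun_prop : Measurable fun p : ℝ × ℝ × ℝ × ℝ =>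
          (|p.2.2.2| ^ (-(3:ℝ)/4) : ℝ)).aestronglyMeasurable).smul hψT))
    have hbound : ∀ᵐ p : ℝ × ℝ × ℝ × ℝ, ENNReal.ofReal ‖F p‖ ≤
        ENNReal.ofReal P₁ * (ENNReal.ofReal (dd p.2.2) * Ψg ((x 0 - p.1 + p.2.2.1 * (x 1 - p.2.1)) / p.2.2.2, Real.sqrt |p.2.2.2| * (x 1 - p.2.1) / p.2.2.2)) := by
      filter_upwards [haeψ, haenz] with p hpe hpa
      rw [hFeq p, hpe]
      have hg0n : Ψg ((x 0 - p.1 + p.2.2.1 * (x 1 - p.2.1)) / p.2.2.2, Real.sqrt |p.2.2.2| * (x 1 - p.2.1) / p.2.2.2) = ENNReal.ofReal ‖g₀ (e2 ((x 0 - p.1 + p.2.2.1 * (x 1 - p.2.1)) / p.2.2.2) (Real.sqrt |p.2.2.2| * (x 1 - p.2.1) / p.2.2.2))‖ := by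
        simp only [hΨg]
        rw [meq_apply]
      rw [hg0n, ← ENNReal.ofReal_mul (hddnn _), ← ENNReal.ofReal_mul hP₁0]
      apply ENNReal.ofReal_le_ofReal
      have habs3 : ‖(|p.2.2.2| ^ (-(3:ℝ)) : ℝ)‖ = |p.2.2.2| ^ (-(3:ℝ)) := by
        rw [Real.norm_eq_abs, _root_.abs_of_nonneg (Real.rpow_nonneg (abs_nonneg _) _)]
      have habs34 : ‖(|p.2.2.2| ^ (-(3:ℝ)/4) : ℝ)‖ = |p.2.2.2| ^ (-(3:ℝ)/4) := by
        rw [Real.norm_eq_abs, _root_.abs_of_nonneg (Real.rpow_nonneg (abs_nonneg _) _)]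
      rw [norm_smul, norm_mul, norm_smul, habs3, habs34]
      have hΦb := phi_bound Φ hΦ p.1 p.2.1 p.2.2.1 p.2.2.2 hpa
      rw [← hP₁def] at hΦb
      have h3nn : (0:ℝ) ≤ |p.2.2.2| ^ (-(3:ℝ)) := Real.rpow_nonneg (abs_nonneg _) _
      have h34nn : (0:ℝ) ≤ |p.2.2.2| ^ (-(3:ℝ)/4) := Real.rpow_nonneg (abs_nonneg _) _
      have hnn : (0:ℝ) ≤ ‖g₀ (e2 ((x 0 - p.1 + p.2.2.1 * (x 1 - p.2.1)) / p.2.2.2) (Real.sqrt |p.2.2.2| * (x 1 - p.2.1) / p.2.2.2))‖ := norm_nonneg _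
      have hexp : dd p.2.2 = |p.2.2.2| ^ (-(3:ℝ)) * |p.2.2.2| ^ (-(3:ℝ)/4) *
          ((1 + p.2.2.1^2) * (|p.2.2.2| ^ ((9:ℝ)/4) + |p.2.2.2| ^ (-((9:ℝ)/4))))⁻¹ := rfl
      rw [hexp]
      calc |p.2.2.2| ^ (-(3:ℝ)) * (‖Φ p.1 p.2.1 p.2.2.1 p.2.2.2‖ *
            (|p.2.2.2| ^ (-(3:ℝ)/4) * ‖g₀ (e2 ((x 0 - p.1 + p.2.2.1 * (x 1 - p.2.1)) / p.2.2.2) (Real.sqrt |p.2.2.2| * (x 1 - p.2.1) / p.2.2.2))‖))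
          ≤ |p.2.2.2| ^ (-(3:ℝ)) * ((P₁ *
              ((1 + p.2.2.1^2) * (|p.2.2.2| ^ ((9:ℝ)/4) + |p.2.2.2| ^ (-((9:ℝ)/4))))⁻¹) *
            (|p.2.2.2| ^ (-(3:ℝ)/4) * ‖g₀ (e2 ((x 0 - p.1 + p.2.2.1 * (x 1 - p.2.1)) / p.2.2.2) (Real.sqrt |p.2.2.2| * (x 1 - p.2.1) / p.2.2.2))‖)) := by
            exact mul_le_mul_of_nonneg_left
              (mul_le_mul_of_nonneg_right hΦb (by positivity)) h3nn
        _ = P₁ * (|p.2.2.2| ^ (-(3:ℝ)) * |p.2.2.2| ^ (-(3:ℝ)/4) *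
            ((1 + p.2.2.1^2) * (|p.2.2.2| ^ ((9:ℝ)/4) + |p.2.2.2| ^ (-((9:ℝ)/4))))⁻¹ *
            ‖g₀ (e2 ((x 0 - p.1 + p.2.2.1 * (x 1 - p.2.1)) / p.2.2.2) (Real.sqrt |p.2.2.2| * (x 1 - p.2.1) / p.2.2.2))‖) := by ring
    have hfin : ∫⁻ p : ℝ × ℝ × ℝ × ℝ, ENNReal.ofReal ‖F p‖ ≤
        ENNReal.ofReal P₁ * ((ENNReal.ofReal (2 * Real.pi) * ENNReal.ofReal Real.pi) *
          ENNReal.ofReal (∫ y : E2, ‖ψ y‖)) := by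
      calc ∫⁻ p : ℝ × ℝ × ℝ × ℝ, ENNReal.ofReal ‖F p‖
          ≤ ∫⁻ p : ℝ × ℝ × ℝ × ℝ, ENNReal.ofReal P₁ *
              (ENNReal.ofReal (dd p.2.2) * Ψg ((x 0 - p.1 + p.2.2.1 * (x 1 - p.2.1)) / p.2.2.2, Real.sqrt |p.2.2.2| * (x 1 - p.2.1) / p.2.2.2)) := lintegral_mono_ae hbound
        _ = ENNReal.ofReal P₁ * ∫⁻ p : ℝ × ℝ × ℝ × ℝ,
              ENNReal.ofReal (dd p.2.2) * Ψg ((x 0 - p.1 + p.2.2.1 * (x 1 - p.2.1)) / p.2.2.2, Real.sqrt |p.2.2.2| * (x 1 - p.2.1) / p.2.2.2) :=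
            lintegral_const_mul' _ _ ENNReal.ofReal_ne_top
        _ = ENNReal.ofReal P₁ * ((∫⁻ q : ℝ × ℝ, ENNReal.ofReal (dd q) *
              ENNReal.ofReal (|q.2| * (|q.2| / Real.sqrt |q.2|))) * ∫⁻ q : ℝ × ℝ, Ψg q) := by
            rw [lemM Ψg hΨgm dd hddm hdd0 (x 0) (x 1)]
        _ ≤ ENNReal.ofReal P₁ * ((ENNReal.ofReal (2 * Real.pi) * ENNReal.ofReal Real.pi) *
              ENNReal.ofReal (∫ y : E2, ‖ψ y‖)) := by
            rw [hIg]
            exact mul_le_mul_right (mul_le_mul_left hK _) _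
    have hInt : Integrable F := by
      refine ⟨hASM, ?_⟩
      rw [hasFiniteIntegral_iff_norm]
      refine lt_of_le_of_lt hfin ?_
      exact ENNReal.mul_lt_top ENNReal.ofReal_lt_top
        (ENNReal.mul_lt_top (ENNReal.mul_lt_top ENNReal.ofReal_lt_top ENNReal.ofReal_lt_top)
          ENNReal.ofReal_lt_top)
    refine ⟨hInt, ?_⟩
    have h1 : ‖sSynth ψ Φ x‖ ≤ (∫⁻ p : ℝ × ℝ × ℝ × ℝ, ENNReal.ofReal ‖F p‖).toReal := by
      have hss : sSynth ψ Φ x = ∫ p : ℝ × ℝ × ℝ × ℝ, F p := rfl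
      rw [hss]
      exact norm_integral_le_lintegral_norm F
    refine h1.trans ?_
    apply ENNReal.toReal_le_of_le_ofReal
    · have : (0:ℝ) ≤ P₁ + P₂ := by linarith
      positivity
    · refine hfin.trans ?_
      rw [← ENNReal.ofReal_mul (by positivity : (0:ℝ) ≤ 2 * Real.pi),
        ← ENNReal.ofReal_mul (by positivity : (0:ℝ) ≤ 2 * Real.pi * Real.pi),
        ← ENNReal.ofReal_mul hP₁0]
      apply ENNReal.ofReal_le_ofReal
      have h2pi : 2 * Real.pi * Real.pi ≤ 20 := by
        nlinarith [Real.pi_lt_d2, Real.pi_gt_three]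
      calc P₁ * (2 * Real.pi * Real.pi * ∫ y : E2, ‖ψ y‖)
          = (2 * Real.pi * Real.pi) * (P₁ * ∫ y : E2, ‖ψ y‖) := by ring
        _ ≤ 20 * (P₁ * ∫ y : E2, ‖ψ y‖) :=
            mul_le_mul_of_nonneg_right h2pi (mul_nonneg hP₁0 hIψ0)
        _ ≤ 20 * (∫ y : E2, ‖ψ y‖) * (P₁ + P₂) := by
            nlinarith [mul_nonneg hIψ0 hP₂0]
  exact ⟨fun x => (main x).1, 20, by norm_num, fun x => (main x).2⟩


end
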